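/- Multiplicative local slice theorem, part (b): With s a G_m-local slice of degree d with denominator c, every weight of a semi-invariant in R_c is divisible by d (i.e., if a ∈ R_c is a semi-invariant of weight t^k then d | k), and the map π: R_c → (R_c)^{G_m} obtained from the isomorphism R_c ≅ (R_c)^{G_m}[y^{±1}] (y ↦ s) followed by y ↦ 1 is a surjective (R_c)^{G_m}-algebra homomorphism with kernel the principal ideal (s − 1). -/

import Mathlib

open LaurentPolynomial

def IsGmCoaction {R : Type*} [CommRing R] (Φ : R →+* LaurentPolynomial R) : Prop :=
  (∀ a : R, (AddMonoidAlgebra.coeff (Φ a)).sum (fun _ r => r) = a) ∧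
  (∀ a : R, Finsupp.mapRange ⇑Φ (map_zero Φ) (AddMonoidAlgebra.coeff (Φ a)) =
    (AddMonoidAlgebra.coeff (Φ a)).sum fun k r => Finsupp.single k (LaurentPolynomial.C r * LaurentPolynomial.T k))

/-!
Since `s` is an invertible semi-invariant of weight `-d`, multiplying a semi-invariant of weight
`k` by `s ^ ⌊k / d⌋` moves its weight into `[0, d)`, where the slice condition forces it to be
invariant; hence `d ∣ k`. The weight components `aₖ` of any `a` are semi-invariant
(coassociativity), so only multiples of `d` occur as weights, and `π a = ∑ₖ aₖ s ^ (k / d)` is a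
ring homomorphism onto the invariants that fixes them and sends `s` to `1`. By the counit axiom
`a = ∑ₖ aₖ`, so `a - π a = ∑ₖ aₖ (1 - s ^ (k / d)) ∈ (s - 1)`, which gives the kernel. The
coaction axioms pass from `R` to `R_c` because they are equalities of ring homomorphisms out of
`R_c`, which are determined by their restriction to `R`.
-/

open AddMonoidAlgebra

namespace LaurentPolynomial

variable {A B : Type*} [CommRing A] [CommRing B]

/-- The coaction `T ↦ T ⊗ T` of `G_m` on `A[T;T⁻¹]` by translation; the outer variable carries
the weight. -/
noncomputable def diagCoaction : A[T;T⁻¹] →+* A[T;T⁻¹][T;T⁻¹] :=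
  liftNCRingHom (C.comp C)
    ((C : A[T;T⁻¹] →+* _).toMonoidHom.comp (of A ℤ) * of A[T;T⁻¹] ℤ) fun _ _ => Commute.all _ _

theorem diagCoaction_single (r : A) (k : ℤ) :
    diagCoaction (single k r) = single k (C r * T k) := by
  rw [diagCoaction, liftNCRingHom_single, single_eq_C_mul_T (C r * T k), map_mul, mul_assoc]
  rfl

theorem coeff_diagCoaction (p : A[T;T⁻¹]) (k : ℤ) :
    (diagCoaction p).coeff k = C (p.coeff k) * T k := by
  induction p using AddMonoidAlgebra.induction_linear with
  | zero => simp
  | add p q hp hq => simp [hp, hq, add_mul]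
  | single n r =>
    rw [diagCoaction_single, coeff_single, coeff_single, Finsupp.single_apply,
      Finsupp.single_apply]
    split_ifs with h <;> simp [h]

theorem coeff_diagCoaction_eq_sum (p : A[T;T⁻¹]) :
    (diagCoaction p).coeff = p.coeff.sum fun k r => Finsupp.single k (C r * T k) := by
  ext k
  rw [coeff_diagCoaction, Finsupp.sum_apply, Finsupp.sum, Finset.sum_eq_single k]
  · simp
  · exact fun j _ hj => Finsupp.single_eq_of_ne' hj
  · intro hk
    rw [Finsupp.notMem_support_iff.mp hk]
    simp

theorem mapRingHom_C_mul_T (f : A →+* B) (r : A) (k : ℤ) :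
    mapRingHom ℤ f (C r * T k) = C (f r) * T k := by
  rw [← single_eq_C_mul_T, ← single_eq_C_mul_T, mapRingHom_single]

theorem diagCoaction_comp_mapRingHom (f : A →+* B) :
    diagCoaction.comp (mapRingHom ℤ f) = (mapRingHom ℤ (mapRingHom ℤ f)).comp diagCoaction := by
  refine RingHom.ext fun p => LaurentPolynomial.ext fun k => ?_
  simp only [RingHom.comp_apply, coeff_diagCoaction, coeff_mapRingHom, mapRingHom_C_mul_T]

theorem eval₂_one_apply (p : A[T;T⁻¹]) :
    eval₂ (RingHom.id A) 1 p = p.coeff.sum fun _ r => r := by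
  induction p using AddMonoidAlgebra.induction_linear with
  | zero => simp
  | add p q hp hq =>
    rw [map_add, hp, hq, coeff_add, Finsupp.sum_add_index' (fun _ => rfl) (fun _ _ _ => rfl)]
  | single n r =>
    rw [coeff_single, Finsupp.sum_single_index rfl, single_eq_C_mul_T, eval₂_C_mul_T, one_zpow,
      Units.val_one, mul_one, RingHom.id_apply]

theorem eval₂_one_comp_mapRingHom (f : A →+* B) :
    (eval₂ (RingHom.id B) 1).comp (mapRingHom ℤ f) = f.comp (eval₂ (RingHom.id A) 1) := by
  refine RingHom.ext fun p => ?_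
  rw [RingHom.comp_apply, RingHom.comp_apply, eval₂_one_apply, eval₂_one_apply, map_finsuppSum,
    coe_mapRingHom, coeff_map, Finsupp.sum_mapRange_index fun _ => rfl]
  rfl

/-- `∑ₖ pₖ u ^ (k / d)`, i.e. `p` evaluated at a `d`-th root of `u`. Since `k / d` is floor
division, this is only meaningful, and multiplicative, on Laurent polynomials in `T ^ d`. -/
noncomputable def evalRoot (d : ℤ) (u : Aˣ) : A[T;T⁻¹] →+ A :=
  liftNC (AddMonoidHom.id A) fun k => ↑(u ^ (k.toAdd / d))

theorem evalRoot_single (d : ℤ) (u : Aˣ) (k : ℤ) (r : A) :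
    evalRoot d u (single k r) = r * ↑(u ^ (k / d)) :=
  liftNC_single _ _ _ _

theorem evalRoot_apply (d : ℤ) (u : Aˣ) (p : A[T;T⁻¹]) :
    evalRoot d u p = p.coeff.sum fun k r => r * ↑(u ^ (k / d)) := by
  conv_lhs => rw [← sum_coeff_single p]
  simp only [map_finsuppSum, evalRoot_single]

theorem evalRoot_mul {d : ℤ} (hd : d ≠ 0) (u : Aˣ) {p q : A[T;T⁻¹]}
    (hp : ∀ k ∈ p.coeff.support, d ∣ k) (hq : ∀ k ∈ q.coeff.support, d ∣ k) :
    evalRoot d u (p * q) = evalRoot d u p * evalRoot d u q := by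
  conv_rhs => rw [← sum_coeff_single p, ← sum_coeff_single q]
  simp_rw [mul_def, map_finsuppSum, evalRoot_single, Finsupp.sum_mul, Finsupp.mul_sum]
  refine Finset.sum_congr rfl fun k hk => Finset.sum_congr rfl fun l hl => ?_
  obtain ⟨m, rfl⟩ := hp k hk
  obtain ⟨n, rfl⟩ := hq l hl
  dsimp only
  rw [← mul_add, Int.mul_ediv_cancel_left _ hd, Int.mul_ediv_cancel_left _ hd,
    Int.mul_ediv_cancel_left _ hd, zpow_add, Units.val_mul]
  ring

end LaurentPolynomial

theorem isGmCoaction_iff {A : Type*} [CommRing A] (Φ : A →+* A[T;T⁻¹]) :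
    IsGmCoaction Φ ↔ (eval₂ (RingHom.id A) 1).comp Φ = RingHom.id A ∧
      (mapRingHom ℤ Φ).comp Φ = diagCoaction.comp Φ := by
  simp only [IsGmCoaction, RingHom.ext_iff, RingHom.comp_apply, RingHom.id_apply,
    eval₂_one_apply, ← coeff_inj, coeff_diagCoaction_eq_sum, coe_mapRingHom, coeff_map]
  rfl

theorem IsGmCoaction.of_isLocalization {R S : Type*} [CommRing R] [CommRing S] [Algebra R S]
    (M : Submonoid R) [IsLocalization M S] {Φ : R →+* R[T;T⁻¹]} (hΦ : IsGmCoaction Φ)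
    {Ψ : S →+* S[T;T⁻¹]}
    (hΨ : Ψ.comp (algebraMap R S) = (mapRingHom ℤ (algebraMap R S)).comp Φ) :
    IsGmCoaction Ψ := by
  rw [isGmCoaction_iff] at hΦ ⊢
  obtain ⟨hcounit, hcoassoc⟩ := hΦ
  constructor
  · apply IsLocalization.ringHom_ext M
    rw [RingHom.comp_assoc, hΨ, ← RingHom.comp_assoc, eval₂_one_comp_mapRingHom,
      RingHom.comp_assoc, hcounit]
    rfl
  · apply IsLocalization.ringHom_ext M
    calc _ = (mapRingHom ℤ Ψ).comp ((mapRingHom ℤ (algebraMap R S)).comp Φ) := by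
          rw [RingHom.comp_assoc, hΨ]
      _ = (mapRingHom ℤ (mapRingHom ℤ (algebraMap R S))).comp
            ((mapRingHom ℤ Φ).comp Φ) := by
          rw [← RingHom.comp_assoc, ← mapRingHom_comp, hΨ, mapRingHom_comp, RingHom.comp_assoc]
      _ = _ := by
          rw [hcoassoc, ← RingHom.comp_assoc, ← diagCoaction_comp_mapRingHom, RingHom.comp_assoc,
            ← hΨ, RingHom.comp_assoc]

section SemiInvariant

variable {A : Type*} [CommRing A] (Φ : A →+* A[T;T⁻¹])

def IsSemiInvariant (k : ℤ) (a : A) : Prop :=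
  Φ a = C a * T k

noncomputable def invariants : Subring A :=
  Φ.eqLocus C

/-- "Degree `< d`" is encoded as "all weights in `(-d, d)`". -/
structure IsLocalSlice (d : ℤ) (s : A) : Prop where
  pos : 0 < d
  isUnit : IsUnit s
  isSemiInvariant : IsSemiInvariant Φ (-d) s
  mem_invariants : ∀ a, (∀ k, d ≤ |k| → (Φ a).coeff k = 0) → a ∈ invariants Φ

variable {Φ}

theorem isSemiInvariant_zero_iff {a : A} : IsSemiInvariant Φ 0 a ↔ a ∈ invariants Φ := by
  rw [IsSemiInvariant, T_zero, mul_one]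
  rfl

theorem IsSemiInvariant.mul {k l : ℤ} {a b : A} (ha : IsSemiInvariant Φ k a)
    (hb : IsSemiInvariant Φ l b) : IsSemiInvariant Φ (k + l) (a * b) := by
  rw [IsSemiInvariant, map_mul, ha, hb, map_mul, T_add]
  ring

theorem IsSemiInvariant.units_inv {k : ℤ} {u : Aˣ} (hu : IsSemiInvariant Φ k u) :
    IsSemiInvariant Φ (-k) ↑u⁻¹ := by
  rw [IsSemiInvariant]
  refine left_inv_eq_right_inv (a := Φ u) ?_ ?_
  · rw [← map_mul, Units.inv_mul, map_one]
  · rw [hu, mul_mul_mul_comm, ← map_mul, Units.mul_inv, ← T_add, add_neg_cancel, map_one,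
      T_zero, mul_one]

theorem IsSemiInvariant.units_zpow {k : ℤ} {u : Aˣ} (hu : IsSemiInvariant Φ k u) (m : ℤ) :
    IsSemiInvariant Φ (k * m) ↑(u ^ m) := by
  induction m using Int.induction_on with
  | zero => simp [IsSemiInvariant]
  | succ n ih =>
    rw [zpow_add_one, Units.val_mul, mul_add_one]
    exact ih.mul hu
  | pred n ih =>
    rw [zpow_sub_one, Units.val_mul, mul_sub_one, sub_eq_add_neg]
    exact ih.mul hu.units_inv

theorem IsSemiInvariant.weight_unique {k l : ℤ} {a : A} (hk : IsSemiInvariant Φ k a)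
    (hl : IsSemiInvariant Φ l a) (ha : a ≠ 0) : k = l := by
  have h : single k a = single l a := by
    rw [single_eq_C_mul_T, single_eq_C_mul_T, ← hk, ← hl]
  exact (single_left_inj ha).mp h

theorem IsGmCoaction.isSemiInvariant_coeff (hΦ : IsGmCoaction Φ) (a : A) (k : ℤ) :
    IsSemiInvariant Φ k ((Φ a).coeff k) := by
  have h := congr($(hΦ.2 a) k)
  rwa [← coeff_diagCoaction_eq_sum, coeff_diagCoaction, Finsupp.mapRange_apply] at h

end SemiInvariant

theorem one_sub_units_zpow_mem_span {A : Type*} [CommRing A] (u : Aˣ) (m : ℤ) :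
    1 - ((u ^ m : Aˣ) : A) ∈ Ideal.span {(u : A) - 1} := by
  set I := Ideal.span {(u : A) - 1}
  have hu : Units.map (Ideal.Quotient.mk I : A →* A ⧸ I) u = 1 :=
    Units.ext ((Ideal.Quotient.eq.mpr (Ideal.mem_span_singleton_self _)).trans (map_one _))
  rw [← Ideal.Quotient.eq_zero_iff_mem, map_sub, map_one, sub_eq_zero]
  calc 1 = ((Units.map (Ideal.Quotient.mk I : A →* A ⧸ I) u ^ m : (A ⧸ I)ˣ) : A ⧸ I) := by
        rw [hu, one_zpow, Units.val_one]
    _ = Ideal.Quotient.mk I ↑(u ^ m) := by rw [← map_zpow]; rfl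

namespace IsLocalSlice

variable {A : Type*} [CommRing A] {Φ : A →+* A[T;T⁻¹]} {d : ℤ} {s : A}

theorem dvd_of_isSemiInvariant (hs : IsLocalSlice Φ d s) {k : ℤ} {a : A}
    (ha : IsSemiInvariant Φ k a) (ha0 : a ≠ 0) : d ∣ k := by
  obtain ⟨hd, ⟨u, rfl⟩, hu, hslice⟩ := hs
  have hb : IsSemiInvariant Φ (k % d) (a * ↑(u ^ (k / d))) := by
    convert ha.mul (hu.units_zpow (k / d)) using 1
    rw [Int.emod_def]
    ring
  have hb0 : a * ↑(u ^ (k / d)) ≠ 0 := by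
    rwa [Ne, Units.mul_left_eq_zero]
  have hinv : IsSemiInvariant Φ 0 (a * ↑(u ^ (k / d))) := by
    refine isSemiInvariant_zero_iff.mpr (hslice _ fun j hj => ?_)
    rw [hb, ← single_eq_C_mul_T, coeff_single, Finsupp.single_eq_of_ne]
    rintro rfl
    rw [abs_of_nonneg (Int.emod_nonneg k hd.ne')] at hj
    exact hj.not_gt (Int.emod_lt_of_pos k hd)
  exact Int.dvd_of_emod_eq_zero (hb.weight_unique hinv hb0)

noncomputable def unit (hs : IsLocalSlice Φ d s) : Aˣ :=
  hs.isUnit.unit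

theorem val_unit (hs : IsLocalSlice Φ d s) : (hs.unit : A) = s :=
  hs.isUnit.unit_spec

theorem isSemiInvariant_unit (hs : IsLocalSlice Φ d s) : IsSemiInvariant Φ (-d) hs.unit := by
  rw [val_unit]
  exact hs.isSemiInvariant

theorem dvd_of_mem_support (hΦ : IsGmCoaction Φ) (hs : IsLocalSlice Φ d s) (a : A) :
    ∀ k ∈ (Φ a).coeff.support, d ∣ k :=
  fun k hk =>
    hs.dvd_of_isSemiInvariant (hΦ.isSemiInvariant_coeff a k) (Finsupp.mem_support_iff.mp hk)

/-- `y ↦ 1` under `A ≅ Aᴳ[y, y⁻¹]`, `y ↦ s`. -/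
noncomputable def retraction (hΦ : IsGmCoaction Φ) (hs : IsLocalSlice Φ d s) : A →+* A where
  toFun a := evalRoot d hs.unit (Φ a)
  map_one' := by
    rw [map_one, ← single_zero_one_eq_one, evalRoot_single, Int.zero_ediv, zpow_zero,
      Units.val_one, one_mul]
  map_mul' a b := by
    rw [map_mul,
      evalRoot_mul hs.pos.ne' _ (hs.dvd_of_mem_support hΦ a) (hs.dvd_of_mem_support hΦ b)]
  map_zero' := by rw [map_zero, map_zero]
  map_add' a b := by rw [map_add, map_add]

variable (hΦ : IsGmCoaction Φ) (hs : IsLocalSlice Φ d s)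

theorem retraction_apply (a : A) :
    hs.retraction hΦ a = (Φ a).coeff.sum fun k r => r * ↑(hs.unit ^ (k / d)) :=
  evalRoot_apply _ _ _

theorem retraction_mem_invariants (a : A) : hs.retraction hΦ a ∈ invariants Φ := by
  rw [retraction_apply, Finsupp.sum]
  refine Subring.sum_mem _ fun k hk => isSemiInvariant_zero_iff.mp ?_
  obtain ⟨m, rfl⟩ := hs.dvd_of_mem_support hΦ a k hk
  convert (hΦ.isSemiInvariant_coeff a (d * m)).mul
    (hs.isSemiInvariant_unit.units_zpow (d * m / d)) using 1
  rw [Int.mul_ediv_cancel_left _ hs.pos.ne']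
  ring

theorem retraction_of_isSemiInvariant {k : ℤ} {a : A} (ha : IsSemiInvariant Φ k a) :
    hs.retraction hΦ a = a * ↑(hs.unit ^ (k / d)) := by
  change evalRoot d _ (Φ a) = _
  rw [ha, ← single_eq_C_mul_T, evalRoot_single]

theorem retraction_eq_self {a : A} (ha : a ∈ invariants Φ) : hs.retraction hΦ a = a := by
  rw [hs.retraction_of_isSemiInvariant hΦ (isSemiInvariant_zero_iff.mpr ha), Int.zero_ediv,
    zpow_zero, Units.val_one, mul_one]

theorem retraction_self : hs.retraction hΦ s = 1 := by
  rw [hs.retraction_of_isSemiInvariant hΦ hs.isSemiInvariant, Int.neg_ediv_self _ hs.pos.ne',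
    zpow_neg_one]
  nth_rw 1 [← hs.val_unit]
  exact Units.mul_inv _

theorem sub_retraction_mem_span (a : A) : a - hs.retraction hΦ a ∈ Ideal.span {s - 1} := by
  have h : a - hs.retraction hΦ a =
      (Φ a).coeff.sum fun k r => r * (1 - ↑(hs.unit ^ (k / d))) := by
    nth_rw 1 [← hΦ.1 a]
    rw [retraction_apply, ← Finsupp.sum_sub]
    simp only [mul_one_sub]
  rw [h, Finsupp.sum]
  refine Ideal.sum_mem _ fun k _ => Ideal.mul_mem_left _ _ ?_
  simpa only [hs.val_unit] using one_sub_units_zpow_mem_span hs.unit (k / d)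

theorem ker_retraction : RingHom.ker (hs.retraction hΦ) = Ideal.span {s - 1} := by
  refine le_antisymm (fun a ha => ?_) ?_
  · simpa [RingHom.mem_ker.mp ha] using hs.sub_retraction_mem_span hΦ a
  · rw [Ideal.span_le, Set.singleton_subset_iff, SetLike.mem_coe, RingHom.mem_ker, map_sub,
      retraction_self, map_one, sub_self]

end IsLocalSlice

theorem stmt14_general {K R : Type*} [CommRing K] [CommRing R] [Algebra K R]
    (Φ : R →ₐ[K] LaurentPolynomial R) (hΦ : IsGmCoaction Φ.toRingHom)
    (c : R)
    (Φc : Localization.Away c →+* LaurentPolynomial (Localization.Away c))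
    (hext : ∀ r : R, AddMonoidAlgebra.coeff (Φc (algebraMap R (Localization.Away c) r)) =
      Finsupp.mapRange (algebraMap R (Localization.Away c))
        (map_zero (algebraMap R (Localization.Away c))) (AddMonoidAlgebra.coeff (Φ r)))
    (d : ℤ) (hd : 0 < d)
    (s : Localization.Away c) (hunit : IsUnit s)
    (hsemi : Φc s = LaurentPolynomial.C s * LaurentPolynomial.T (-d))
    (hslice : ∀ a : Localization.Away c,
      (∀ k : ℤ, d ≤ |k| → (AddMonoidAlgebra.coeff (Φc a)) k = 0) → Φc a = LaurentPolynomial.C a) :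
    (∀ (a : Localization.Away c) (k : ℤ), a ≠ 0 →
      Φc a = LaurentPolynomial.C a * LaurentPolynomial.T k → d ∣ k) ∧
    ∃ π : Localization.Away c →+* Localization.Away c,
      (∀ a : Localization.Away c, Φc (π a) = LaurentPolynomial.C (π a)) ∧
      (∀ a : Localization.Away c, Φc a = LaurentPolynomial.C a → π a = a) ∧
      π s = 1 ∧
      RingHom.ker π = Ideal.span {s - 1} := by
  have hΦc : IsGmCoaction Φc :=
    hΦ.of_isLocalization (Submonoid.powers c) (RingHom.ext fun r => coeff_injective (hext r))
  have hs : IsLocalSlice Φc d s := ⟨hd, hunit, hsemi, hslice⟩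
  exact ⟨fun a k ha hak => hs.dvd_of_isSemiInvariant hak ha, hs.retraction hΦc,
    hs.retraction_mem_invariants hΦc, fun a => hs.retraction_eq_self hΦc, hs.retraction_self hΦc,
    hs.ker_retraction hΦc⟩

/-- multiplicative local slice theorem, part (b): with `s` a `G_m`-local
slice of degree `d` and denominator `c`, the weight of every nonzero semi-invariant of
`R_c` is divisible by `d`, and there is a retraction `π : R_c → (R_c)^{G_m}` ("`y ↦ 1`"):
a ring endomorphism of `R_c` landing in the invariants, restricting to the identity on
the invariants (hence a surjective homomorphism of `(R_c)^{G_m}`-algebras onto them),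
with `π(s) = 1` and kernel the principal ideal `(s - 1)`. -/
theorem stmt14 {K R : Type*} [CommRing K] [CommRing R] [Algebra K R]
    (Φ : R →ₐ[K] LaurentPolynomial R) (hΦ : IsGmCoaction Φ.toRingHom)
    (c : R) (hc : c ≠ 0) (w : ℤ) (hw : Φ c = LaurentPolynomial.C c * LaurentPolynomial.T w)
    (Φc : Localization.Away c →+* LaurentPolynomial (Localization.Away c))
    (hext : ∀ r : R, AddMonoidAlgebra.coeff (Φc (algebraMap R (Localization.Away c) r)) =
      Finsupp.mapRange (algebraMap R (Localization.Away c))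
        (map_zero (algebraMap R (Localization.Away c))) (AddMonoidAlgebra.coeff (Φ r)))
    (d : ℤ) (hd : 0 < d)
    (s : Localization.Away c) (hunit : IsUnit s)
    (hsemi : Φc s = LaurentPolynomial.C s * LaurentPolynomial.T (-d))
    (hslice : ∀ a : Localization.Away c,
      (∀ k : ℤ, d ≤ |k| → (AddMonoidAlgebra.coeff (Φc a)) k = 0) → Φc a = LaurentPolynomial.C a) :
    (∀ (a : Localization.Away c) (k : ℤ), a ≠ 0 →
      Φc a = LaurentPolynomial.C a * LaurentPolynomial.T k → d ∣ k) ∧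
    ∃ π : Localization.Away c →+* Localization.Away c,
      (∀ a : Localization.Away c, Φc (π a) = LaurentPolynomial.C (π a)) ∧
      (∀ a : Localization.Away c, Φc a = LaurentPolynomial.C a → π a = a) ∧
      π s = 1 ∧
      RingHom.ker π = Ideal.span {s - 1} :=
  stmt14_general Φ hΦ c Φc hext d hd s hunit hsemi hslice
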